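/- arXiv:1307.2975 — 2 statements merged into one kernel-verified Lean document; each statement's English description precedes it below -/
import Mathlib

section
/- Let n ≥ 1, let z₁,…,z_n ∈ ℂ be distinct with Im z_k > 0 for each k, and let s₁,…,s_n ∈ ℂ² be such that the Gramian matrix M is invertible. If r₁,…,r_n ∈ ℂ² satisfy the linear system (L1), then they also satisfy the linear system (L2): i·r_k = Σ_{j=1}^n (⟨r_j,r_k⟩/(conj(z_j) − z_k))·s_j for each k = 1,…,n. -/
open MeasureTheory Matrix ENNReal Filter

noncomputable section

/-- The Pauli matrix `σ₃ = diag(1, -1)`. -/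
def sigma3 : Matrix (Fin 2) (Fin 2) ℂ := !![1, 0; 0, -1]

/-- `Q(w)` : the off-diagonal matrix with `(1,2)`-entry `w` and `(2,1)`-entry `-conj w`. -/
def Qm (w : ℂ) : Matrix (Fin 2) (Fin 2) ℂ := !![0, w; -(starRingEnd ℂ w), 0]

/-- The Hermitian inner product `⟨u,v⟩ = conj u₁ * v₁ + conj u₂ * v₂` on `ℂ²`. -/
def inn (u v : Fin 2 → ℂ) : ℂ := starRingEnd ℂ (u 0) * v 0 + starRingEnd ℂ (u 1) * v 1

/-- The outer product `u ⊗ conj v`. -/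
def outer (u v : Fin 2 → ℂ) : Matrix (Fin 2) (Fin 2) ℂ :=
  Matrix.of fun a b => u a * starRingEnd ℂ (v b)

/-- The Gramian matrix `M_{k,j} = -i ⟨s_j, s_k⟩ / (conj z_k - z_j)`. -/
def gram {n : ℕ} (z : Fin n → ℂ) (s : Fin n → Fin 2 → ℂ) : Matrix (Fin n) (Fin n) ℂ :=
  Matrix.of fun k j => -Complex.I * inn (s j) (s k) / (starRingEnd ℂ (z k) - z j)

/-- The `(j,k)`-cofactor `D_{j,k}` of a square matrix. -/
def cof {n : ℕ} (A : Matrix (Fin n) (Fin n) ℂ) (j k : Fin n) : ℂ := A.adjugate k j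

/-- The linear system (L1): `i s_k = ∑_j (⟨s_j,s_k⟩/(conj z_k - z_j)) r_j`. -/
def L1sys {n : ℕ} (z : Fin n → ℂ) (s r : Fin n → Fin 2 → ℂ) : Prop :=
  ∀ k, Complex.I • s k = ∑ j, (inn (s j) (s k) / (starRingEnd ℂ (z k) - z j)) • r j

/-- The linear system (L2): `i r_k = ∑_j (⟨r_j,r_k⟩/(conj z_j - z_k)) s_j`. -/
def L2sys {n : ℕ} (z : Fin n → ℂ) (s r : Fin n → Fin 2 → ℂ) : Prop :=
  ∀ k, Complex.I • r k = ∑ j, (inn (r j) (r k) / (starRingEnd ℂ (z j) - z k)) • s j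

/-- A classical solution of the cubic NLS equation `i q_t + q_xx + 2 |q|² q = 0`;
functions of `(x, t)` are encoded as `q : ℝ → ℝ → ℂ`, `x` first. -/
def IsClassicalNLS (q : ℝ → ℝ → ℂ) : Prop :=
  (∀ t, ContDiff ℝ 2 fun x => q x t) ∧ (∀ x, ContDiff ℝ 1 fun t => q x t) ∧
    ∀ x t, Complex.I * deriv (fun τ => q x τ) t + deriv (deriv fun y => q y t) x
      + 2 * (‖q x t‖ : ℂ) ^ 2 * q x t = 0

/-- The `x`-part Lax matrix `U = -i z σ₃ + Q(w)`. -/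
def Ux (z w : ℂ) : Matrix (Fin 2) (Fin 2) ℂ := (-(Complex.I * z)) • sigma3 + Qm w

/-- The `t`-part Lax matrix `V = i(|w|² - 2z²) σ₃ + 2 z Q(w) - i Q(w_x) σ₃`. -/
def Vt (z w wx : ℂ) : Matrix (Fin 2) (Fin 2) ℂ :=
  (Complex.I * ((‖w‖ : ℂ) ^ 2 - 2 * z ^ 2)) • sigma3 + (2 * z) • Qm w
    - Complex.I • (Qm wx * sigma3)

/-- The dressed potential `q = q₀ - (2/D) ∑_{k,j} D_{j,k} s_{j,1} conj (s_{k,2})` (pointwise). -/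
def dressQ {n : ℕ} (z : Fin n → ℂ) (q0 : ℂ) (s : Fin n → Fin 2 → ℂ) : ℂ :=
  q0 - 2 / (gram z s).det *
    ∑ k, ∑ j, cof (gram z s) j k * s j 0 * starRingEnd ℂ (s k 1)

/-- `Σ^S` of the 2-soliton, as a function of the phases `φ₁, φ₂, ψ₁, ψ₂`. -/
def SigmaSof (η₁ η₂ ξ₁ ξ₂ φ₁ φ₂ ψ₁ ψ₂ : ℝ) : ℂ :=
  (Complex.exp (-2*(η₂:ℂ)*(φ₂:ℂ) + 2*Complex.I*(ψ₁:ℂ)) +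
      Complex.exp (2*(η₂:ℂ)*(φ₂:ℂ) + 2*Complex.I*(ψ₁:ℂ))) / (2*(η₂:ℂ))
  + (Complex.exp (-2*(η₁:ℂ)*(φ₁:ℂ) + 2*Complex.I*(ψ₂:ℂ)) +
      Complex.exp (2*(η₁:ℂ)*(φ₁:ℂ) + 2*Complex.I*(ψ₂:ℂ))) / (2*(η₁:ℂ))
  - (Complex.exp (-2*(η₂:ℂ)*(φ₂:ℂ) + 2*Complex.I*(ψ₁:ℂ)) +
      Complex.exp (2*(η₁:ℂ)*(φ₁:ℂ) + 2*Complex.I*(ψ₂:ℂ))) /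
        ((η₁:ℂ) + (η₂:ℂ) + Complex.I*((ξ₁:ℂ) - (ξ₂:ℂ)))
  - (Complex.exp (-2*(η₁:ℂ)*(φ₁:ℂ) + 2*Complex.I*(ψ₂:ℂ)) +
      Complex.exp (2*(η₂:ℂ)*(φ₂:ℂ) + 2*Complex.I*(ψ₁:ℂ))) /
        ((η₁:ℂ) + (η₂:ℂ) - Complex.I*((ξ₁:ℂ) - (ξ₂:ℂ)))

/-- `D^S` of the 2-soliton, as a function of the phases `φ₁, φ₂, ψ₁, ψ₂`. -/
def DSof (η₁ η₂ ξ₁ ξ₂ φ₁ φ₂ ψ₁ ψ₂ : ℝ) : ℂ :=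
  (Complex.exp (-2*(η₁:ℂ)*(φ₁:ℂ)) + Complex.exp (2*(η₁:ℂ)*(φ₁:ℂ))) *
      (Complex.exp (-2*(η₂:ℂ)*(φ₂:ℂ)) + Complex.exp (2*(η₂:ℂ)*(φ₂:ℂ))) / (4*(η₁:ℂ)*(η₂:ℂ))
  - (Complex.exp (-(η₁:ℂ)*(φ₁:ℂ) - (η₂:ℂ)*(φ₂:ℂ) + Complex.I*((ψ₁:ℂ) - (ψ₂:ℂ))) +
      Complex.exp ((η₁:ℂ)*(φ₁:ℂ) + (η₂:ℂ)*(φ₂:ℂ) - Complex.I*((ψ₁:ℂ) - (ψ₂:ℂ)))) *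
    (Complex.exp (-(η₁:ℂ)*(φ₁:ℂ) - (η₂:ℂ)*(φ₂:ℂ) - Complex.I*((ψ₁:ℂ) - (ψ₂:ℂ))) +
      Complex.exp ((η₁:ℂ)*(φ₁:ℂ) + (η₂:ℂ)*(φ₂:ℂ) + Complex.I*((ψ₁:ℂ) - (ψ₂:ℂ)))) /
    (((η₁:ℂ) + (η₂:ℂ))^2 + ((ξ₁:ℂ) - (ξ₂:ℂ))^2)

/-- The phase `φ = x + 4 ξ t - x_c`. -/
def phiSol (ξ xc x t : ℝ) : ℝ := x + 4*ξ*t - xc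

/-- The phase `ψ = θ - ξ (x + 2 ξ t - x_c) + 2 η² t`. -/
def psiSol (θ ξ xc η x t : ℝ) : ℝ := θ - ξ*(x + 2*ξ*t - xc) + 2*η^2*t

/-- `D^S(x,t)` for the 2-soliton with parameters `η₁, η₂, ξ₁, ξ₂, x₁, x₂, θ₁, θ₂`. -/
def twoSolitonD (η₁ η₂ ξ₁ ξ₂ x₁ x₂ θ₁ θ₂ x t : ℝ) : ℂ :=
  DSof η₁ η₂ ξ₁ ξ₂ (phiSol ξ₁ x₁ x t) (phiSol ξ₂ x₂ x t)
    (psiSol θ₁ ξ₁ x₁ η₁ x t) (psiSol θ₂ ξ₂ x₂ η₂ x t)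

/-- `Σ^S(x,t)` for the 2-soliton. -/
def twoSolitonSigma (η₁ η₂ ξ₁ ξ₂ x₁ x₂ θ₁ θ₂ x t : ℝ) : ℂ :=
  SigmaSof η₁ η₂ ξ₁ ξ₂ (phiSol ξ₁ x₁ x t) (phiSol ξ₂ x₂ x t)
    (psiSol θ₁ ξ₁ x₁ η₁ x t) (psiSol θ₂ ξ₂ x₂ η₂ x t)

/-- The 2-soliton `q^S = 2 Σ^S / D^S`. -/
def twoSoliton (η₁ η₂ ξ₁ ξ₂ x₁ x₂ θ₁ θ₂ x t : ℝ) : ℂ :=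
  2 * twoSolitonSigma η₁ η₂ ξ₁ ξ₂ x₁ x₂ θ₁ θ₂ x t / twoSolitonD η₁ η₂ ξ₁ ξ₂ x₁ x₂ θ₁ θ₂ x t

/-- The separable (Jost-type) form
`s = e^{-i conj z (x - x_j) - 2 i conj z² t + i θ_j} f - e^{i conj z (x - x_j) + 2 i conj z² t - i θ_j} g`. -/
def jost (zj : ℂ) (xj θj : ℝ) (f g : ℝ → ℝ → Fin 2 → ℂ) (x t : ℝ) : Fin 2 → ℂ :=
  Complex.exp (-(Complex.I) * starRingEnd ℂ zj * ((x:ℂ) - (xj:ℂ))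
      - 2*Complex.I*(starRingEnd ℂ zj)^2*(t:ℂ) + Complex.I*(θj:ℂ)) • f x t
  - Complex.exp (Complex.I * starRingEnd ℂ zj * ((x:ℂ) - (xj:ℂ))
      + 2*Complex.I*(starRingEnd ℂ zj)^2*(t:ℂ) - Complex.I*(θj:ℂ)) • g x t

/-- The pair of eigenvalues `z_j = ξ_j + i η_j`, `j = 1, 2`. -/
def zvec (ξ₁ η₁ ξ₂ η₂ : ℝ) : Fin 2 → ℂ :=
  ![(ξ₁:ℂ) + (η₁:ℂ)*Complex.I, (ξ₂:ℂ) + (η₂:ℂ)*Complex.I]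

/-- The two vector functions `s₁, s₂` in separable form. -/
def sJ (ξ₁ η₁ ξ₂ η₂ x₁ x₂ θ₁ θ₂ : ℝ) (f g : Fin 2 → ℝ → ℝ → Fin 2 → ℂ) (j : Fin 2)
    (x t : ℝ) : Fin 2 → ℂ :=
  jost (zvec ξ₁ η₁ ξ₂ η₂ j) (![x₁, x₂] j) (![θ₁, θ₂] j) (f j) (g j) x t

/-- The explicit vector solutions used to build the `n`-soliton from `q₀ = 0`. -/
def solS {n : ℕ} (z : Fin n → ℂ) (xs θ : Fin n → ℝ) (j : Fin n) (x t : ℝ) : Fin 2 → ℂ :=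
  ![Complex.exp (-(Complex.I) * starRingEnd ℂ (z j) * ((x:ℂ) - ((xs j : ℝ):ℂ))
      - 2*Complex.I*(starRingEnd ℂ (z j))^2*(t:ℂ) + Complex.I*((θ j : ℝ):ℂ)),
    -Complex.exp (Complex.I * starRingEnd ℂ (z j) * ((x:ℂ) - ((xs j : ℝ):ℂ))
      + 2*Complex.I*(starRingEnd ℂ (z j))^2*(t:ℂ) - Complex.I*((θ j : ℝ):ℂ))]

/-- The `n`-soliton with parameters `{ξ_j, η_j, x_j, θ_j}`. -/
def nSoliton {n : ℕ} (ξ η xs θ : Fin n → ℝ) (x t : ℝ) : ℂ :=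
  dressQ (fun j => (ξ j : ℂ) + (η j : ℂ)*Complex.I) 0
    (fun j => solS (fun j => (ξ j : ℂ) + (η j : ℂ)*Complex.I) xs θ j x t)

/-!
Write `S`, `R` for the `n × 2` matrices with rows `s_k`, `r_k`, `M` for the Gramian and
`Z = diag z`; (L1) says `S = M R`. Since `Im z_k > 0`, the Gramian is the unique solution `X` of
the displacement equation `conj(Z) X - X Z = -i S Sᴴ`. As `M` is Hermitian, `S Sᴴ = M (R Rᴴ) M`,
so `M⁻¹ conj(Z) - Z M⁻¹ = -i R Rᴴ`: this is the displacement equation of the Gramian of the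
`r_k` at the nodes `-conj z_k`, which therefore equals `M⁻¹`. Now `R = M⁻¹ S` is (L1) for these
nodes with `s` and `r` exchanged, and that is (L2).
-/

theorem Units.inv_mul_sub_mul_inv_eq {R : Type*} [Ring R] (u : Rˣ) {x y c : R}
    (h : x * u - u * y = u * c * u) : ↑u⁻¹ * x - y * ↑u⁻¹ = c := by
  calc ↑u⁻¹ * x - y * ↑u⁻¹ = ↑u⁻¹ * (x * u - u * y) * ↑u⁻¹ := by
        simp only [mul_sub, sub_mul, mul_assoc, Units.mul_inv, mul_one, Units.inv_mul_cancel_left]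
    _ = c := by
        rw [h, mul_assoc, mul_assoc, Units.mul_inv, mul_one, Units.inv_mul_cancel_left]

theorem conj_sub_ne_zero_of_im_pos {z w : ℂ} (hz : 0 < z.im) (hw : 0 < w.im) :
    starRingEnd ℂ z - w ≠ 0 := by
  intro h
  have him := congrArg Complex.im h
  simp only [Complex.sub_im, Complex.conj_im, Complex.zero_im] at him
  linarith

theorem of_mul_conjTranspose_of_apply {n : ℕ} (s : Fin n → Fin 2 → ℂ) (k j : Fin n) :
    (of s * (of s)ᴴ) k j = inn (s j) (s k) := by
  simp [Matrix.mul_apply, inn, Fin.sum_univ_two, mul_comm]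

theorem gram_isHermitian {n : ℕ} (z : Fin n → ℂ) (s : Fin n → Fin 2 → ℂ) :
    (gram z s).IsHermitian := by
  ext k j
  simp only [conjTranspose_apply, _root_.gram, of_apply, star_div₀, star_mul', star_neg,
    Complex.star_def, Complex.conj_I, map_sub, Complex.conj_conj, inn, map_add, map_mul]
  rw [← neg_sub, div_neg]
  ring

theorem L1sys_iff {n : ℕ} (z : Fin n → ℂ) (s r : Fin n → Fin 2 → ℂ) :
    L1sys z s r ↔ of s = gram z s * of r := by
  have hcoef : ∀ k j, inn (s j) (s k) / (starRingEnd ℂ (z k) - z j) = Complex.I * gram z s k j :=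
    fun k j => by
      rw [_root_.gram, of_apply, ← mul_div_assoc, ← mul_assoc, mul_neg, Complex.I_mul_I, neg_neg,
        one_mul]
  rw [← Matrix.ext_iff]
  simp only [L1sys, hcoef, funext_iff, Matrix.mul_apply, of_apply, Finset.sum_apply,
    Pi.smul_apply, smul_eq_mul]
  refine forall_congr' fun k => forall_congr' fun a => ?_
  simp only [mul_assoc, ← Finset.mul_sum, mul_right_inj' Complex.I_ne_zero]

theorem L2sys_iff_L1sys {n : ℕ} (z : Fin n → ℂ) (s r : Fin n → Fin 2 → ℂ) :
    L2sys z s r ↔ L1sys (fun k => -starRingEnd ℂ (z k)) r s := by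
  have hden : ∀ k j, starRingEnd ℂ (-starRingEnd ℂ (z k)) - -starRingEnd ℂ (z j)
      = starRingEnd ℂ (z j) - z k := fun k j => by simp only [map_neg, Complex.conj_conj]; ring
  simp only [L1sys, L2sys, hden]

theorem diagonal_mul_sub_mul_diagonal_eq_iff {n : ℕ} {z : Fin n → ℂ}
    (hz : ∀ k j, starRingEnd ℂ (z k) - z j ≠ 0) (s : Fin n → Fin 2 → ℂ)
    (X : Matrix (Fin n) (Fin n) ℂ) :
    diagonal (fun k => starRingEnd ℂ (z k)) * X - X * diagonal z
      = -Complex.I • (of s * (of s)ᴴ) ↔ X = gram z s := by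
  have hentry : ∀ k j, (diagonal (fun k => starRingEnd ℂ (z k)) * X - X * diagonal z) k j
      = (starRingEnd ℂ (z k) - z j) * X k j := fun k j => by
    simp only [Matrix.sub_apply, diagonal_mul, mul_diagonal]; ring
  simp only [← Matrix.ext_iff, hentry, Matrix.smul_apply, of_mul_conjTranspose_of_apply,
    _root_.gram, of_apply, smul_eq_mul]
  refine forall_congr' fun k => forall_congr' fun j => ?_
  rw [eq_div_iff (hz k j), mul_comm (X k j)]

theorem gram_inv_eq_gram {n : ℕ} {z : Fin n → ℂ} (him : ∀ k, 0 < (z k).im)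
    {s r : Fin n → Fin 2 → ℂ} (hM : IsUnit (gram z s)) (hS : of s = gram z s * of r) :
    (gram z s)⁻¹ = gram (fun k => -starRingEnd ℂ (z k)) r := by
  set M := gram z s
  have hdisp : diagonal (fun k => starRingEnd ℂ (z k)) * M - M * diagonal z
      = M * (-Complex.I • (of r * (of r)ᴴ)) * M := by
    rw [(diagonal_mul_sub_mul_diagonal_eq_iff
      (fun k j => conj_sub_ne_zero_of_im_pos (him k) (him j)) s M).2 rfl, hS,
      conjTranspose_mul, (gram_isHermitian z s).eq]
    simp only [Matrix.mul_smul, Matrix.smul_mul, Matrix.mul_assoc]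
    rfl
  have hinv := hM.unit.inv_mul_sub_mul_inv_eq hdisp
  rw [coe_units_inv, IsUnit.unit_spec] at hinv
  rw [← diagonal_mul_sub_mul_diagonal_eq_iff (fun k j => conj_sub_ne_zero_of_im_pos
    (by simpa using him k) (by simpa using him j)) r, ← hinv]
  simp only [Complex.conj_conj, map_neg, ← diagonal_neg, neg_mul, mul_neg]
  abel

theorem stmt_2_general (n : ℕ) (z : Fin n → ℂ)
    (him : ∀ k, 0 < (z k).im) (s : Fin n → Fin 2 → ℂ)
    (hM : IsUnit (gram z s)) (r : Fin n → Fin 2 → ℂ) (hr : L1sys z s r) :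
    L2sys z s r := by
  have hS := (L1sys_iff z s r).1 hr
  rw [L2sys_iff_L1sys, L1sys_iff, ← gram_inv_eq_gram him hM hS, hS, ← Matrix.mul_assoc,
    nonsing_inv_mul _ ((isUnit_iff_isUnit_det _).1 hM), Matrix.one_mul]

/-- If the Gramian is invertible and (L1) holds, then (L2) holds. -/
theorem stmt_2 (n : ℕ) (hn : 1 ≤ n) (z : Fin n → ℂ) (hz : Function.Injective z)
    (him : ∀ k, 0 < (z k).im) (s : Fin n → Fin 2 → ℂ)
    (hM : IsUnit (gram z s)) (r : Fin n → Fin 2 → ℂ) (hr : L1sys z s r) :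
    L2sys z s r :=
  stmt_2_general n z him s hM r hr
end
end

section
/- Let n ≥ 1, let z₁,…,z_n ∈ ℂ be distinct with Im z_k > 0 for each k, and let r₁,…,r_n, s₁,…,s_n ∈ ℂ² satisfy both the linear system (L1) and the linear system (L2). Then for each k = 1,…,n one has the exchange identity Σ_{m=1}^n ⟨r_m, s_k⟩ s_m = Σ_{j=1}^n ⟨s_j, s_k⟩ r_j. -/
open MeasureTheory Matrix ENNReal Filter

noncomputable section

/-! The coefficients `c m j = ⟨r_m, r_j⟩ / (conj z_m - z_j)` of (L2), `i r_j = ∑ m, c m j s_m`,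
form a skew-Hermitian matrix. Pairing (L2) against `s_k` on the left therefore gives
`⟨r_m, s_k⟩ = -i ∑ j, c m j ⟨s_j, s_k⟩`; substituting this into `∑ m, ⟨r_m, s_k⟩ s_m` and
summing over `m` first reproduces `-i ∑ j, ⟨s_j, s_k⟩ (i r_j)` by (L2) once more. -/

open Complex

section ConjLinear

variable {ι E : Type*} [Fintype ι] [AddCommGroup E] [Module ℂ E]

theorem sum_conjLinear_smul_comm_of_mem_skewAdjoint (f : E →ₗ⋆[ℂ] ℂ)
    {C : Matrix ι ι ℂ} (hC : C ∈ skewAdjoint (Matrix ι ι ℂ)) {r s : ι → E}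
    (h : ∀ j, I • r j = ∑ m, C m j • s m) :
    ∑ m, f (r m) • s m = ∑ j, f (s j) • r j := by
  have hf : ∀ m, f (r m) = -I * ∑ j, C m j * f (s j) := by
    intro m
    have hCmj : ∀ j, starRingEnd ℂ (C j m) = -C m j := fun j => by
      have hC' : Cᴴ = -C := skewAdjoint.mem_iff.mp hC
      simpa using congrFun (congrFun hC' m) j
    have hm := congrArg f (h m)
    simp only [map_sum, LinearMap.map_smulₛₗ, conj_I, smul_eq_mul, hCmj, neg_mul,
      Finset.sum_neg_distrib] at hm
    linear_combination I * hm + f (r m) * I_sq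
  calc ∑ m, f (r m) • s m
      = -I • ∑ j, f (s j) • ∑ m, C m j • s m := by
        simp only [hf, Finset.mul_sum, Finset.sum_smul, Finset.smul_sum, smul_smul]
        rw [Finset.sum_comm]
        exact Finset.sum_congr rfl fun j _ => Finset.sum_congr rfl fun m _ => by ring_nf
    _ = ∑ j, f (s j) • r j := by
        simp only [← h, Finset.smul_sum, smul_smul]
        refine Finset.sum_congr rfl fun j _ => ?_
        rw [show -I * (f (s j) * I) = f (s j) by linear_combination -f (s j) * I_sq]

end ConjLinear

def innLeft (v : Fin 2 → ℂ) : (Fin 2 → ℂ) →ₗ⋆[ℂ] ℂ where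
  toFun u := inn u v
  map_add' u w := by simp only [inn, Pi.add_apply, map_add]; ring
  map_smul' c u := by simp only [inn, Pi.smul_apply, smul_eq_mul, map_mul]; ring

theorem conj_inn (u v : Fin 2 → ℂ) : starRingEnd ℂ (inn u v) = inn v u := by
  simp only [inn, map_add, map_mul, conj_conj]; ring

theorem mem_skewAdjoint_inn_div {n : ℕ} (z : Fin n → ℂ) (r : Fin n → Fin 2 → ℂ) :
    Matrix.of (fun m j => inn (r m) (r j) / (starRingEnd ℂ (z m) - z j))
      ∈ skewAdjoint (Matrix (Fin n) (Fin n) ℂ) := by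
  refine skewAdjoint.mem_iff.mpr (Matrix.ext fun m j => ?_)
  simp only [Matrix.star_apply, Matrix.of_apply, Matrix.neg_apply, RCLike.star_def, map_div₀,
    conj_inn, map_sub, conj_conj]
  rw [← neg_sub, div_neg]

theorem stmt_3_general (n : ℕ) (z : Fin n → ℂ) (r s : Fin n → Fin 2 → ℂ)
    (hL2 : L2sys z s r) :
    ∀ k, ∑ m, inn (r m) (s k) • s m = ∑ j, inn (s j) (s k) • r j := fun k =>
  sum_conjLinear_smul_comm_of_mem_skewAdjoint (innLeft (s k)) (mem_skewAdjoint_inn_div z r) hL2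

/-- The exchange identity `∑_m ⟨r_m, s_k⟩ s_m = ∑_j ⟨s_j, s_k⟩ r_j`, given (L1) and (L2). -/
theorem stmt_3 (n : ℕ) (hn : 1 ≤ n) (z : Fin n → ℂ) (hz : Function.Injective z)
    (him : ∀ k, 0 < (z k).im) (r s : Fin n → Fin 2 → ℂ)
    (hL1 : L1sys z s r) (hL2 : L2sys z s r) :
    ∀ k, ∑ m, inn (r m) (s k) • s m = ∑ j, inn (s j) (s k) • r j :=
  stmt_3_general n z r s hL2
end
end
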